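/- arXiv:2507.21392 — 2 statements merged into one kernel-verified Lean document; each statement's English description precedes it below -/
import Mathlib

section
/- Let θ ∈ [0,1], ε ∈ (−1,1). With α₂ = (θ+1)/2, α₁ = −θ, α₀ = (θ−1)/2 and the DLN weights β₀, β₁, β₂ (as functions of θ and ε), define a₁ = −√(θ(1−θ²))/(√2·(1+εθ)), a₂ = −((1−ε)/2)·a₁, a₀ = −((1+ε)/2)·a₁. Then for any real numbers v₋₁, v₀, v₁, the following algebraic identity holds: (α₂v₁ + α₁v₀ + α₀v₋₁)·(β₂v₁ + β₁v₀ + β₀v₋₁) = [(1+θ)/4·v₁² + (1−θ)/4·v₀²] − [(1+θ)/4·v₀² + (1−θ)/4·v₋₁²] + (a₂v₁ + a₁v₀ + a₀v₋₁)². -/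
/-! With `r = (1 - θ²) / (1 + εθ)²` the weights `β₂, β₁, β₀` are affine in `r` and `a₁² = θ r / 2`.
Once `a₁²` is eliminated, both sides are affine in `r`, and their difference is a multiple of
`r (1 + εθ)² - (1 - θ²)`; the square roots matter only through `a₁² = θ r / 2`. -/

theorem dln_gStability_identity {θ ε r a : ℝ} (hr : r * (1 + ε * θ) ^ 2 = 1 - θ ^ 2)
    (ha : a ^ 2 = θ * r / 2) (vm1 v₀ v₁ : ℝ) :
    ((θ + 1) / 2 * v₁ - θ * v₀ + (θ - 1) / 2 * vm1)
        * ((1 + r + ε ^ 2 * θ * r + θ) / 4 * v₁ + (1 - r) / 2 * v₀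
          + (1 + r - ε ^ 2 * θ * r - θ) / 4 * vm1) =
      ((1 + θ) / 4 * v₁ ^ 2 + (1 - θ) / 4 * v₀ ^ 2)
        - ((1 + θ) / 4 * v₀ ^ 2 + (1 - θ) / 4 * vm1 ^ 2)
        + (-((1 - ε) / 2) * a * v₁ + a * v₀ - (1 + ε) / 2 * a * vm1) ^ 2 := by
  linear_combination (v₁ - vm1) * (vm1 + v₁ - 2 * v₀) / 8 * hr
    - (-((1 - ε) / 2) * v₁ + v₀ - (1 + ε) / 2 * vm1) ^ 2 * ha

theorem sq_neg_sqrt_div {x y : ℝ} (hx : 0 ≤ x) :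
    (-Real.sqrt x / (Real.sqrt 2 * y)) ^ 2 = x / (2 * y ^ 2) := by
  rw [div_pow, neg_sq, mul_pow, Real.sq_sqrt hx, Real.sq_sqrt zero_le_two]

/-- Scalar G-stability identity of the variable-step DLN method. -/
theorem stmt_5 (θ ε : ℝ) (hθ : θ ∈ Set.Icc (0 : ℝ) 1) (hε : ε ∈ Set.Ioo (-1 : ℝ) 1)
    (α₂ α₁ α₀ β₂ β₁ β₀ a₁ a₂ a₀ : ℝ)
    (hα₂ : α₂ = (θ + 1) / 2) (hα₁ : α₁ = -θ) (hα₀ : α₀ = (θ - 1) / 2)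
    (hβ₂ : β₂ = (1 / 4) * (1 + (1 - θ ^ 2) / (1 + ε * θ) ^ 2
        + ε ^ 2 * (θ * (1 - θ ^ 2)) / (1 + ε * θ) ^ 2 + θ))
    (hβ₁ : β₁ = (1 / 2) * (1 - (1 - θ ^ 2) / (1 + ε * θ) ^ 2))
    (hβ₀ : β₀ = (1 / 4) * (1 + (1 - θ ^ 2) / (1 + ε * θ) ^ 2
        - ε ^ 2 * (θ * (1 - θ ^ 2)) / (1 + ε * θ) ^ 2 - θ))
    (ha₁ : a₁ = -Real.sqrt (θ * (1 - θ ^ 2)) / (Real.sqrt 2 * (1 + ε * θ)))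
    (ha₂ : a₂ = -((1 - ε) / 2) * a₁) (ha₀ : a₀ = -((1 + ε) / 2) * a₁)
    (vm1 v₀ v₁ : ℝ) :
    (α₂ * v₁ + α₁ * v₀ + α₀ * vm1) * (β₂ * v₁ + β₁ * v₀ + β₀ * vm1) =
      ((1 + θ) / 4 * v₁ ^ 2 + (1 - θ) / 4 * v₀ ^ 2)
        - ((1 + θ) / 4 * v₀ ^ 2 + (1 - θ) / 4 * vm1 ^ 2)
        + (a₂ * v₁ + a₁ * v₀ + a₀ * vm1) ^ 2 := by
  obtain ⟨hθ₀, hθ₁⟩ := hθ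
  obtain ⟨hε₀, hε₁⟩ := hε
  have hpos : 0 < 1 + ε * θ := by
    nlinarith [mul_nonneg (sub_nonneg.2 hε₁.le) (sub_nonneg.2 hθ₁),
      mul_nonneg (neg_le_iff_add_nonneg.1 hε₀.le) hθ₀]
  have hθ' : 0 ≤ θ * (1 - θ ^ 2) := mul_nonneg hθ₀ (by nlinarith)
  set r := (1 - θ ^ 2) / (1 + ε * θ) ^ 2 with hr_def
  have hr : r * (1 + ε * θ) ^ 2 = 1 - θ ^ 2 := div_mul_cancel₀ _ (by positivity)
  have ha₁_sq : a₁ ^ 2 = θ * r / 2 := by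
    rw [ha₁, sq_neg_sqrt_div hθ', hr_def, mul_comm, ← div_div]
    ring
  subst hα₂ hα₁ hα₀ hβ₂ hβ₁ hβ₀ ha₂ ha₀
  linear_combination dln_gStability_identity hr ha₁_sq vm1 v₀ v₁
end

section
/- Let H be a real inner product space, θ ∈ [0,1], ε ∈ (−1,1), with DLN coefficients α₂=(θ+1)/2, α₁=−θ, α₀=(θ−1)/2, weights β₂, β₁, β₀ (the DLN weights in θ, ε), and a₀, a₁, a₂ as in the G-stability kernel. Then for any u₋₁, u₀, u₁ ∈ H: ⟪α₂u₁+α₁u₀+α₀u₋₁, β₂u₁+β₁u₀+β₀u₋₁⟫ = ((1+θ)/4)‖u₁‖² + ((1−θ)/4)‖u₀‖² − ((1+θ)/4)‖u₀‖² − ((1−θ)/4)‖u₋₁‖² + ‖a₂u₁+a₁u₀+a₀u₋₁‖². -/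
/-!
Expanding both sides in the Gram entries `⟪uᵢ, uⱼ⟫` turns the identity into six scalar
equations between the coefficients. Writing `κ = (1 - θ²)/(1 + εθ)²`, so that `a₁² = θκ/2`,
each of them is a polynomial identity modulo `κ (1 + εθ)² = 1 - θ²`.
-/

open RealInnerProductSpace

lemma dln_a₁_sq {θ ε a₁ : ℝ} (hθ : θ ∈ Set.Icc (0 : ℝ) 1)
    (ha₁ : a₁ = -Real.sqrt (θ * (1 - θ ^ 2)) / (Real.sqrt 2 * (1 + ε * θ))) :
    a₁ ^ 2 = θ * ((1 - θ ^ 2) / (1 + ε * θ) ^ 2) / 2 := by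
  have hθ' : 0 ≤ θ * (1 - θ ^ 2) := mul_nonneg hθ.1 (by nlinarith [hθ.1, hθ.2])
  rw [ha₁, div_pow, neg_sq, mul_pow, Real.sq_sqrt hθ', Real.sq_sqrt zero_le_two, mul_comm 2,
    ← div_div]
  ring

section GStability

variable {H : Type*} [NormedAddCommGroup H] [InnerProductSpace ℝ H]

lemma inner_smul_add_smul_add_smul (a₂ a₁ a₀ b₂ b₁ b₀ : ℝ) (x y z : H) :
    ⟪a₂ • x + a₁ • y + a₀ • z, b₂ • x + b₁ • y + b₀ • z⟫ =
      a₂ * b₂ * ‖x‖ ^ 2 + a₁ * b₁ * ‖y‖ ^ 2 + a₀ * b₀ * ‖z‖ ^ 2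
        + (a₂ * b₁ + a₁ * b₂) * ⟪x, y⟫ + (a₂ * b₀ + a₀ * b₂) * ⟪x, z⟫
        + (a₁ * b₀ + a₀ * b₁) * ⟪y, z⟫ := by
  simp only [inner_add_left, inner_add_right, real_inner_smul_left, real_inner_smul_right,
    real_inner_self_eq_norm_sq, real_inner_comm x y, real_inner_comm x z, real_inner_comm y z]
  ring

lemma inner_eq_add_norm_sq_of_coeff {α₂ α₁ α₀ β₂ β₁ β₀ g₂ g₁ g₀ a₂ a₁ a₀ : ℝ}
    (h₂ : α₂ * β₂ = g₂ + a₂ ^ 2) (h₁ : α₁ * β₁ = g₁ + a₁ ^ 2) (h₀ : α₀ * β₀ = g₀ + a₀ ^ 2)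
    (h₂₁ : α₂ * β₁ + α₁ * β₂ = 2 * a₂ * a₁) (h₂₀ : α₂ * β₀ + α₀ * β₂ = 2 * a₂ * a₀)
    (h₁₀ : α₁ * β₀ + α₀ * β₁ = 2 * a₁ * a₀) (x y z : H) :
    ⟪α₂ • x + α₁ • y + α₀ • z, β₂ • x + β₁ • y + β₀ • z⟫ =
      g₂ * ‖x‖ ^ 2 + g₁ * ‖y‖ ^ 2 + g₀ * ‖z‖ ^ 2 + ‖a₂ • x + a₁ • y + a₀ • z‖ ^ 2 := by
  rw [← real_inner_self_eq_norm_sq (a₂ • x + a₁ • y + a₀ • z), inner_smul_add_smul_add_smul,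
    inner_smul_add_smul_add_smul, h₂, h₁, h₀, h₂₁, h₂₀, h₁₀]
  ring

lemma dln_gStability_identity_s7 {θ ε κ α₂ α₁ α₀ β₂ β₁ β₀ a₁ a₂ a₀ : ℝ}
    (hκ : κ * (1 + ε * θ) ^ 2 = 1 - θ ^ 2)
    (hα₂ : α₂ = (θ + 1) / 2) (hα₁ : α₁ = -θ) (hα₀ : α₀ = (θ - 1) / 2)
    (hβ₂ : β₂ = (1 + κ + ε ^ 2 * θ * κ + θ) / 4) (hβ₁ : β₁ = (1 - κ) / 2)
    (hβ₀ : β₀ = (1 + κ - ε ^ 2 * θ * κ - θ) / 4)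
    (ha₁ : a₁ ^ 2 = θ * κ / 2) (ha₂ : a₂ = -((1 - ε) / 2) * a₁) (ha₀ : a₀ = -((1 + ε) / 2) * a₁)
    (x y z : H) :
    ⟪α₂ • x + α₁ • y + α₀ • z, β₂ • x + β₁ • y + β₀ • z⟫ =
      (1 + θ) / 4 * ‖x‖ ^ 2 + -(θ / 2) * ‖y‖ ^ 2 + -((1 - θ) / 4) * ‖z‖ ^ 2
        + ‖a₂ • x + a₁ • y + a₀ • z‖ ^ 2 := by
  subst hα₂ hα₁ hα₀ hβ₂ hβ₁ hβ₀ ha₂ ha₀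
  apply inner_eq_add_norm_sq_of_coeff
  · linear_combination (1 / 8) * hκ - ((1 - ε) ^ 2 / 4) * ha₁
  · linear_combination -ha₁
  · linear_combination -(1 / 8) * hκ - ((1 + ε) ^ 2 / 4) * ha₁
  · linear_combination -(1 / 4) * hκ + (1 - ε) * ha₁
  · linear_combination -((1 - ε ^ 2) / 2) * ha₁
  · linear_combination (1 / 4) * hκ + (1 + ε) * ha₁

end GStability

/-- G-stability identity of the variable-step DLN method in a real inner product space. -/
theorem stmt_7 {H : Type*} [NormedAddCommGroup H] [InnerProductSpace ℝ H]
    (θ ε : ℝ) (hθ : θ ∈ Set.Icc (0 : ℝ) 1) (hε : ε ∈ Set.Ioo (-1 : ℝ) 1)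
    (α₂ α₁ α₀ β₂ β₁ β₀ a₁ a₂ a₀ : ℝ)
    (hα₂ : α₂ = (θ + 1) / 2) (hα₁ : α₁ = -θ) (hα₀ : α₀ = (θ - 1) / 2)
    (hβ₂ : β₂ = (1 / 4) * (1 + (1 - θ ^ 2) / (1 + ε * θ) ^ 2
        + ε ^ 2 * (θ * (1 - θ ^ 2)) / (1 + ε * θ) ^ 2 + θ))
    (hβ₁ : β₁ = (1 / 2) * (1 - (1 - θ ^ 2) / (1 + ε * θ) ^ 2))
    (hβ₀ : β₀ = (1 / 4) * (1 + (1 - θ ^ 2) / (1 + ε * θ) ^ 2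
        - ε ^ 2 * (θ * (1 - θ ^ 2)) / (1 + ε * θ) ^ 2 - θ))
    (ha₁ : a₁ = -Real.sqrt (θ * (1 - θ ^ 2)) / (Real.sqrt 2 * (1 + ε * θ)))
    (ha₂ : a₂ = -((1 - ε) / 2) * a₁) (ha₀ : a₀ = -((1 + ε) / 2) * a₁)
    (um1 u₀ u₁ : H) :
    (inner ℝ (α₂ • u₁ + α₁ • u₀ + α₀ • um1) (β₂ • u₁ + β₁ • u₀ + β₀ • um1) : ℝ) =
      ((1 + θ) / 4) * ‖u₁‖ ^ 2 + ((1 - θ) / 4) * ‖u₀‖ ^ 2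
        - ((1 + θ) / 4) * ‖u₀‖ ^ 2 - ((1 - θ) / 4) * ‖um1‖ ^ 2
        + ‖a₂ • u₁ + a₁ • u₀ + a₀ • um1‖ ^ 2 := by
  have hden : 1 + ε * θ ≠ 0 := by nlinarith [hθ.1, hθ.2, hε.1, hε.2]
  have hκ : (1 - θ ^ 2) / (1 + ε * θ) ^ 2 * (1 + ε * θ) ^ 2 = 1 - θ ^ 2 :=
    div_mul_cancel₀ _ (pow_ne_zero 2 hden)
  rw [dln_gStability_identity_s7 hκ hα₂ hα₁ hα₀ (by rw [hβ₂]; ring) (by rw [hβ₁]; ring)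
    (by rw [hβ₀]; ring) (dln_a₁_sq hθ ha₁) ha₂ ha₀]
  ring
end
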